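/- arXiv:2306.06241 — 15 statements merged into one kernel-verified Lean document; each statement's English description precedes it below -/
import Mathlib

section
/- Let (G_α)_{α∈A} be a family of almost paratopological semitopological groups. Then the product group G = ∏_{α∈A} G_α, equipped with the product topology, is an almost paratopological group. -/
open Pointwise

/-- A semitopological group `G` is almost paratopological if for every `g` with
`1 ∉ closure {g}` there is a neighborhood `U` of `1` with `g ∉ U * U`. -/
def IsAlmostParatopological (G : Type*) [Group G] [TopologicalSpace G] : Prop :=
  ∀ g : G, (1 : G) ∉ closure ({g} : Set G) → ∃ U ∈ nhds (1 : G), g ∉ U * U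

theorem prod_almostParatopological {ι : Type*} {G : ι → Type*}
    [∀ i, Group (G i)] [∀ i, TopologicalSpace (G i)]
    (hl : ∀ i, ∀ g : G i, Continuous fun x : G i => g * x)
    (hr : ∀ i, ∀ g : G i, Continuous fun x : G i => x * g)
    (h : ∀ i, IsAlmostParatopological (G i)) :
    IsAlmostParatopological (∀ i, G i) := by
  intro g hg
  -- find a coordinate where 1 ∉ closure {g i}
  have hi : ∃ i, (1 : G i) ∉ closure ({g i} : Set (G i)) := by
    by_contra hc
    push_neg at hc
    apply hg
    have : ({g} : Set (∀ i, G i)) = Set.pi Set.univ (fun i => ({g i} : Set (G i))) := by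
      rw [Set.univ_pi_singleton]
    rw [this, closure_pi_set]
    intro i _
    exact hc i
  obtain ⟨i, hi⟩ := hi
  obtain ⟨U, hU, hgU⟩ := h i (g i) hi
  refine ⟨(fun x : ∀ j, G j => x i) ⁻¹' U, ?_, ?_⟩
  · exact (continuous_apply i).continuousAt.preimage_mem_nhds (by simpa using hU)
  · rintro ⟨a, ha, b, hb, rfl⟩
    exact hgU ⟨a i, ha, b i, hb, rfl⟩
end

section
/- Every Hausdorff quasitopological group is almost paratopological. -/
open Pointwise

theorem hausdorff_quasitopological_almostParatopological {G : Type*} [Group G]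
    [TopologicalSpace G] [T2Space G]
    (hl : ∀ g : G, Continuous fun x : G => g * x)
    (hr : ∀ g : G, Continuous fun x : G => x * g)
    (hinv : Continuous fun x : G => x⁻¹) :
    IsAlmostParatopological G := by
  intro g hg
  have hne : (1 : G) ≠ g := by
    intro h
    exact hg (subset_closure (by simp [← h]))
  obtain ⟨A, B, hA, hB, h1A, hgB, hAB⟩ := t2_separation hne
  set U0 : Set G := A ∩ (fun x : G => g * x) ⁻¹' B with hU0
  have hU0open : IsOpen U0 := hA.inter (hB.preimage (hl g))
  have h1U0 : (1 : G) ∈ U0 := ⟨h1A, by simpa using hgB⟩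
  set U : Set G := U0 ∩ (fun x : G => x⁻¹) ⁻¹' U0 with hU
  refine ⟨U, (hU0open.inter (hU0open.preimage hinv)).mem_nhds ⟨h1U0, by simpa using h1U0⟩, ?_⟩
  rintro ⟨u, hu, v, hv, huv⟩
  have huA : u ∈ A := hu.1.1
  have hvinv : v⁻¹ ∈ U0 := hv.2
  have huB : u ∈ B := by
    have : g * v⁻¹ ∈ B := hvinv.2
    rwa [← huv, mul_inv_cancel_right] at this
  exact hAB.ne_of_mem huA huB rfl
end

section
/- Let G be a semitopological group and suppose there exists a continuous group isomorphism φ from G onto a T1 almost paratopological semitopological group H. Then G is almost paratopological. -/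
open Pointwise

theorem almostParatopological_of_continuous_iso {G H : Type*}
    [Group G] [TopologicalSpace G] [Group H] [TopologicalSpace H] [T1Space H]
    (hlG : ∀ g : G, Continuous fun x : G => g * x)
    (hrG : ∀ g : G, Continuous fun x : G => x * g)
    (hlH : ∀ h : H, Continuous fun x : H => h * x)
    (hrH : ∀ h : H, Continuous fun x : H => x * h)
    (hH : IsAlmostParatopological H)
    (φ : G ≃* H) (hφ : Continuous φ) :
    IsAlmostParatopological G := by
  intro g hg
  -- φ g ≠ 1
  have hne : φ g ≠ 1 := by
    intro h
    have : g = 1 := by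
      apply φ.injective
      simpa using h
    exact hg (this ▸ subset_closure rfl)
  -- in a T1 space, closure of a singleton is the singleton
  have h1 : (1 : H) ∉ closure ({φ g} : Set H) := by
    rw [closure_singleton]
    simpa [eq_comm] using hne
  obtain ⟨U, hU, hgU⟩ := hH (φ g) h1
  refine ⟨φ ⁻¹' U, ?_, ?_⟩
  · have : Filter.Tendsto φ (nhds 1) (nhds 1) := by
      have := hφ.continuousAt (x := (1 : G))
      simpa [ContinuousAt, map_one] using this
    exact this hU
  · intro hgm
    apply hgU
    obtain ⟨a, ha, b, hb, hab⟩ := hgm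
    exact ⟨φ a, ha, φ b, hb, by rw [← hab]; simp⟩
end

section
/- The group ℤ of integers equipped with the cofinite topology is not almost paratopological; that is, there exists g ∈ ℤ with 0 not in the closure of {g} (indeed any g ≠ 0, since the topology is T1) such that for every neighborhood U of 0 one has g ∈ U + U. -/
/-!
Every neighbourhood of `0` in the cofinite topology has finite complement, and in an infinite
group two sets with finite complement already add up to the whole group: for fixed `g`, all but
finitely many `a` satisfy both `a ∈ U` and `-a + g ∈ U`. Since the topology is T1, any `g ≠ 0`
witnesses the failure.
-/

open Topology Pointwise Filter

theorem add_eq_univ_of_mem_cofinite {G : Type*} [AddGroup G] [Infinite G] {s t : Set G}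
    (hs : s ∈ cofinite) (ht : t ∈ cofinite) : s + t = Set.univ := by
  refine Set.eq_univ_of_forall fun g => ?_
  have hsplit : ∀ᶠ a in cofinite, a ∈ s ∧ -a + g ∈ t :=
    Filter.eventually_and.mpr
      ⟨hs, ((add_left_injective g).comp neg_injective).tendsto_cofinite.eventually ht⟩
  obtain ⟨a, has, hat⟩ := hsplit.exists
  exact ⟨a, has, -a + g, hat, add_neg_cancel_left a g⟩

theorem mem_cofinite_of_mem_nhds {X : Type*} [TopologicalSpace X]
    (hX : ∀ s : Set X, IsOpen s → s = ∅ ∨ sᶜ.Finite) {x : X} {U : Set X} (hU : U ∈ 𝓝 x) :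
    U ∈ cofinite := by
  obtain ⟨V, hVU, hV, hxV⟩ := mem_nhds_iff.mp hU
  rcases hX V hV with rfl | hVfin
  · exact absurd hxV (Set.notMem_empty x)
  · exact mem_of_superset hVfin hVU

theorem int_cofinite_not_almostParatopological (t : TopologicalSpace ℤ)
    (ht : ∀ s : Set ℤ, IsOpen[t] s ↔ s = ∅ ∨ (sᶜ : Set ℤ).Finite) :
    ∃ g : ℤ, (0 : ℤ) ∉ closure[t] ({g} : Set ℤ) ∧ ∀ U ∈ @nhds ℤ t 0, g ∈ U + U := by
  let _ := t
  refine ⟨1, ?_, fun U hU => ?_⟩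
  · have hclosed : IsClosed ({1} : Set ℤ) :=
      isOpen_compl_iff.mp ((ht _).mpr (Or.inr (by simp)))
    rw [hclosed.closure_eq]
    simp
  · have hUcof : U ∈ cofinite := mem_cofinite_of_mem_nhds (fun s => (ht s).mp) hU
    simp [add_eq_univ_of_mem_cofinite hUcof hUcof]
end

section
/- Let G be a semitopological group and let E_G = ⋂_{U ∈ 𝒩_e} cl(U⁻¹). Then the closure of {e} is contained in E_G, and E_G = ⋂_{U ∈ 𝒩_e} U⁻¹·U⁻¹. -/
open Pointwise

theorem closure_one_subset_E_and_E_eq {G : Type*} [Group G] [TopologicalSpace G]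
    (hl : ∀ g : G, Continuous fun x : G => g * x)
    (hr : ∀ g : G, Continuous fun x : G => x * g) :
    closure ({(1 : G)} : Set G) ⊆ ⋂ U ∈ nhds (1 : G), closure U⁻¹ ∧
      ⋂ U ∈ nhds (1 : G), closure U⁻¹ = ⋂ U ∈ nhds (1 : G), U⁻¹ * U⁻¹ := by
  constructor
  · intro x hx
    simp only [Set.mem_iInter]
    intro U hU
    refine closure_mono ?_ hx
    rw [Set.singleton_subset_iff, Set.mem_inv, inv_one]
    exact mem_of_mem_nhds hU
  · ext x
    simp only [Set.mem_iInter]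
    constructor
    · intro hx U hU
      have hUx : (fun y : G => y * x⁻¹) ⁻¹' U ∈ nhds x := by
        have := (hr x⁻¹).continuousAt (x := x)
        apply this.preimage_mem_nhds
        simpa using hU
      have := (mem_closure_iff_nhds.mp (hx U hU)) _ hUx
      obtain ⟨y, hy1, hy2⟩ := this
      have hv : y * x⁻¹ ∈ U := hy1
      have hu : y⁻¹ ∈ U := hy2
      have : x = (y * x⁻¹)⁻¹ * (y⁻¹)⁻¹ := by group
      rw [this]
      exact Set.mul_mem_mul (Set.inv_mem_inv.mpr hv) (Set.inv_mem_inv.mpr hu)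
    · intro hx V hV
      rw [mem_closure_iff_nhds]
      intro W hW
      have hWx : (fun y : G => y * x) ⁻¹' W ∈ nhds (1 : G) := by
        have := (hr x).continuousAt (x := (1 : G))
        apply this.preimage_mem_nhds
        simpa using hW
      have hU : V ∩ (fun y : G => y * x) ⁻¹' W ∈ nhds (1 : G) := Filter.inter_mem hV hWx
      obtain ⟨a, ha, b, hb, hab⟩ := hx _ hU
      have ha' : a⁻¹ ∈ V ∩ (fun y : G => y * x) ⁻¹' W := Set.inv_mem_inv.mp (by simpa using ha)
      have hb' : b⁻¹ ∈ V ∩ (fun y : G => y * x) ⁻¹' W := Set.inv_mem_inv.mp (by simpa using hb)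
      refine ⟨b, ?_, ?_⟩
      · have : b = a⁻¹ * x := by rw [← hab]; group
        rw [this]
        exact ha'.2
      · exact Set.inv_mem_inv.mp (by simpa using hb'.1)
end

section
/- Let G be a semitopological group and let E_G = ⋂_{U ∈ 𝒩_e} cl(U⁻¹). Then G is almost paratopological if and only if E_G equals the closure of {e}. -/
open Pointwise

private lemma aux_closure_iff {G : Type*} [Group G] [TopologicalSpace G]
    (hl : ∀ g : G, Continuous fun x : G => g * x) (g : G) :
    (1 : G) ∈ closure ({g} : Set G) ↔ g⁻¹ ∈ closure ({(1 : G)} : Set G) := by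
  constructor
  · intro h
    have hsub : closure ({g} : Set G) ⊆ (fun x : G => g⁻¹ * x) ⁻¹' closure ({(1 : G)} : Set G) := by
      apply closure_minimal
      · intro x hx
        simp only [Set.mem_singleton_iff] at hx
        subst hx
        simpa using subset_closure (Set.mem_singleton (1 : G))
      · exact IsClosed.preimage (hl g⁻¹) isClosed_closure
    simpa using hsub h
  · intro h
    have hsub : closure ({(1 : G)} : Set G) ⊆ (fun x : G => g * x) ⁻¹' closure ({g} : Set G) := by
      apply closure_minimal
      · intro x hx
        simp only [Set.mem_singleton_iff] at hx
        subst hx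
        simpa using subset_closure (Set.mem_singleton g)
      · exact IsClosed.preimage (hl g) isClosed_closure
    simpa using hsub h

theorem almostParatopological_iff_E_eq_closure_one {G : Type*} [Group G] [TopologicalSpace G]
    (hl : ∀ g : G, Continuous fun x : G => g * x)
    (hr : ∀ g : G, Continuous fun x : G => x * g) :
    IsAlmostParatopological G ↔
      ⋂ U ∈ nhds (1 : G), closure U⁻¹ = closure ({(1 : G)} : Set G) := by
  constructor
  · intro hAP
    apply Set.Subset.antisymm
    · intro g hg
      by_contra hgc
      have h1 : (1 : G) ∉ closure ({g⁻¹} : Set G) := by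
        rw [aux_closure_iff hl, inv_inv]
        exact hgc
      obtain ⟨U, hU, hUU⟩ := hAP g⁻¹ h1
      simp only [Set.mem_iInter] at hg
      have hgcl : g ∈ closure U⁻¹ := hg U hU
      have hN : (fun x : G => x * g⁻¹) ⁻¹' U ∈ nhds g :=
        (hr g⁻¹).continuousAt.preimage_mem_nhds (by simpa using hU)
      obtain ⟨x, hxN, hxU⟩ := mem_closure_iff_nhds.mp hgcl _ hN
      apply hUU
      have : g⁻¹ = x⁻¹ * (x * g⁻¹) := by group
      rw [this]
      exact Set.mul_mem_mul (by simpa using hxU) hxN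
    · intro g hg
      simp only [Set.mem_iInter]
      intro U hU
      refine closure_mono ?_ hg
      intro x hx
      simp only [Set.mem_singleton_iff] at hx
      subst hx
      simpa using mem_of_mem_nhds hU
  · intro hE g hg
    have hginv : g⁻¹ ∉ closure ({(1 : G)} : Set G) := fun h =>
      hg ((aux_closure_iff hl g).mpr h)
    rw [← hE] at hginv
    simp only [Set.mem_iInter, not_forall] at hginv
    obtain ⟨U, hU, hgU⟩ := hginv
    refine ⟨U ∩ ((fun x : G => x * g⁻¹) ⁻¹' (closure U⁻¹)ᶜ), ?_, ?_⟩
    · refine Filter.inter_mem hU ?_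
      exact (hr g⁻¹).continuousAt.preimage_mem_nhds
        (by simpa using isClosed_closure.isOpen_compl.mem_nhds hgU)
    · rintro ⟨v, hv, w, hw, rfl⟩
      have h1 : v⁻¹ = w * (v * w)⁻¹ := by group
      have h2 : w * (v * w)⁻¹ ∈ (closure U⁻¹)ᶜ := hw.2
      rw [← h1] at h2
      exact h2 (subset_closure (by simpa using hv.1))
end

section
/- Let G be a semitopological group, let S_G = {(x, y) ∈ G × G : xy = e}, let m : G × G → G be the multiplication map, and let E_G = ⋂_{U ∈ 𝒩_e} cl(U⁻¹). Then the closure of S_G in G × G (with the product topology) equals m⁻¹(E_G). -/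
open Pointwise

theorem closure_S_eq_mul_preimage_E {G : Type*} [Group G] [TopologicalSpace G]
    (hl : ∀ g : G, Continuous fun x : G => g * x)
    (hr : ∀ g : G, Continuous fun x : G => x * g) :
    closure {p : G × G | p.1 * p.2 = 1} =
      (fun p : G × G => p.1 * p.2) ⁻¹' (⋂ U ∈ nhds (1 : G), closure U⁻¹) := by
  have hLmap : ∀ (g : G) (a : G) (s : Set G), s ∈ nhds a →
      (fun b : G => g * b) '' s ∈ nhds (g * a) := by
    intro g a s hs
    have heq : (fun b : G => g * b) '' s = (fun b : G => g⁻¹ * b) ⁻¹' s := by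
      ext z
      constructor
      · rintro ⟨w, hw, rfl⟩; simpa using hw
      · intro hz; exact ⟨g⁻¹ * z, hz, by group⟩
    rw [heq]
    have : (fun b : G => g⁻¹ * b) (g * a) = a := by group
    exact (hl g⁻¹).continuousAt.preimage_mem_nhds (by simpa using hs)
  have hRmap : ∀ (g : G) (a : G) (s : Set G), s ∈ nhds a →
      (fun b : G => b * g) '' s ∈ nhds (a * g) := by
    intro g a s hs
    have heq : (fun b : G => b * g) '' s = (fun b : G => b * g⁻¹) ⁻¹' s := by
      ext z
      constructor
      · rintro ⟨w, hw, rfl⟩; simpa using hw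
      · intro hz; exact ⟨z * g⁻¹, hz, by group⟩
    rw [heq]
    have : (fun b : G => b * g⁻¹) (a * g) = a := by group
    exact (hr g⁻¹).continuousAt.preimage_mem_nhds (by simpa using hs)
  ext ⟨x, y⟩
  simp only [Set.mem_preimage, Set.mem_iInter, Set.mem_setOf_eq]
  constructor
  · intro h U hU
    rw [mem_closure_iff_nhds]
    intro V hV
    have hA : (fun a : G => a * y) ⁻¹' V ∈ nhds x := (hr y).continuousAt.preimage_mem_nhds hV
    have hB : (fun b : G => y * b) '' U ∈ nhds y := by
      have := hLmap y 1 U hU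
      simpa using this
    have hprod : ((fun a : G => a * y) ⁻¹' V) ×ˢ ((fun b : G => y * b) '' U) ∈
        nhds (x, y) := prod_mem_nhds hA hB
    rcases (mem_closure_iff_nhds.mp h) _ hprod with ⟨⟨a, b⟩, ⟨haV, hbB⟩, hab⟩
    simp only [Set.mem_setOf_eq] at hab
    rcases hbB with ⟨u, hu, hbu⟩
    refine ⟨a * y, haV, ?_⟩
    rw [Set.mem_inv]
    have hb : b = a⁻¹ := (inv_eq_of_mul_eq_one_right hab).symm
    have h1 : y * u = b := hbu
    have hu' : (a * y)⁻¹ = u := by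
      rw [mul_inv_rev, ← hb, ← h1]
      group
    rw [hu']; exact hu
  · intro h
    rw [mem_closure_iff_nhds]
    intro t ht
    rw [mem_nhds_prod_iff] at ht
    rcases ht with ⟨A, hA, B, hB, hAB⟩
    have hU : (fun b : G => y⁻¹ * b) '' B ∈ nhds (1 : G) := by
      have := hLmap y⁻¹ y B hB
      simpa using this
    have hxy := h _ hU
    rw [mem_closure_iff_nhds] at hxy
    have hV : (fun a : G => a * y) '' A ∈ nhds (x * y) := hRmap y x A hA
    rcases hxy _ hV with ⟨w, ⟨a, haA, haw⟩, hwU⟩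
    rw [Set.mem_inv] at hwU
    rcases hwU with ⟨b, hbB, hbw⟩
    refine ⟨(a, b), hAB ⟨haA, hbB⟩, ?_⟩
    simp only [Set.mem_setOf_eq]
    dsimp only at haw hbw
    have h1 : y⁻¹ * b = y⁻¹ * a⁻¹ := by rw [hbw, ← haw, mul_inv_rev]
    have hb : b = a⁻¹ := mul_left_cancel h1
    rw [hb, mul_inv_cancel]
end

section
/- Let G be a semitopological group and let E_G = ⋂_{U ∈ 𝒩_e} cl(U⁻¹). Then G is a T1 almost paratopological group if and only if E_G = {e}. -/
open Pointwise

theorem t1_almostParatopological_iff_E_eq_one {G : Type*} [Group G] [TopologicalSpace G]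
    (hl : ∀ g : G, Continuous fun x : G => g * x)
    (hr : ∀ g : G, Continuous fun x : G => x * g) :
    (T1Space G ∧ IsAlmostParatopological G) ↔
      ⋂ U ∈ nhds (1 : G), closure U⁻¹ = ({1} : Set G) := by
  -- left translation is a homeomorphism
  have hmap : ∀ (g x : G), Filter.map (fun y : G => g * y) (nhds x) = nhds (g * x) := by
    intro g x
    exact Homeomorph.map_nhds_eq
      ⟨⟨fun y => g * y, fun y => g⁻¹ * y,
        fun y => by group, fun y => by group⟩, hl g, hl g⁻¹⟩ x
  have himg : ∀ (g x : G) (S : Set G), S ∈ nhds x →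
      (fun y : G => g * y) '' S ∈ nhds (g * x) := by
    intro g x S hS
    rw [← hmap g x]
    exact Filter.image_mem_map hS
  have hopen : ∀ (g : G) (S : Set G), IsOpen S → IsOpen ((fun y : G => g * y) '' S) := by
    intro g S hS
    have : (fun y : G => g * y) '' S = (fun y : G => g⁻¹ * y) ⁻¹' S := by
      ext x
      constructor
      · rintro ⟨y, hy, rfl⟩
        simpa [inv_mul_cancel_left] using hy
      · intro hx
        exact ⟨g⁻¹ * x, hx, by group⟩
    rw [this]
    exact hS.preimage (hl g⁻¹)
  constructor
  · rintro ⟨hT1, hAP⟩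
    apply Set.eq_of_subset_of_subset
    · intro g hg
      by_contra hg1
      have hgne : g ≠ 1 := by simpa using hg1
      have h1 : (1 : G) ∉ closure ({g⁻¹} : Set G) := by
        rw [closure_singleton]
        simp only [Set.mem_singleton_iff]
        intro h
        exact hgne (by rw [← inv_inv g, ← h, inv_one])
      obtain ⟨U, hU, hgU⟩ := hAP g⁻¹ h1
      have hgmem : g ∈ closure U⁻¹ := Set.mem_iInter₂.mp hg U hU
      have hnb : (fun y : G => g * y) '' U ∈ nhds g := by
        simpa using himg g 1 U hU
      obtain ⟨x, ⟨u, hu, rfl⟩, hx⟩ := mem_closure_iff_nhds.mp hgmem _ hnb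
      have hx' : (g * u)⁻¹ ∈ U := Set.mem_inv.mp hx
      exact hgU ⟨u, hu, (g * u)⁻¹, hx', by group⟩
    · intro g hg
      rw [Set.mem_singleton_iff] at hg
      subst hg
      refine Set.mem_iInter₂.mpr fun U hU => subset_closure ?_
      rw [Set.mem_inv, inv_one]
      exact mem_of_mem_nhds hU
  · intro hE
    constructor
    · refine ⟨fun g => ?_⟩
      refine isClosed_of_closure_subset fun h hh => ?_
      have hcl1 : g⁻¹ * h ∈ closure ({1} : Set G) := by
        rw [mem_closure_iff_nhds]
        intro W hW
        have hW' : (fun y : G => g * y) '' W ∈ nhds h := by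
          have := himg g (g⁻¹ * h) W hW
          rwa [mul_inv_cancel_left] at this
        obtain ⟨x, ⟨w, hw, hgw⟩, hx⟩ := mem_closure_iff_nhds.mp hh _ hW'
        rw [Set.mem_singleton_iff] at hx
        have hw1 : w = 1 := mul_left_cancel (a := g) (by simpa [hx, mul_one] using hgw)
        exact ⟨1, hw1 ▸ hw, rfl⟩
      have : g⁻¹ * h ∈ ⋂ U ∈ nhds (1 : G), closure U⁻¹ := by
        refine Set.mem_iInter₂.mpr fun U hU => ?_
        refine closure_mono ?_ hcl1
        intro x hx
        rw [Set.mem_singleton_iff] at hx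
        subst hx
        rw [Set.mem_inv, inv_one]
        exact mem_of_mem_nhds hU
      rw [hE, Set.mem_singleton_iff] at this
      have hhg : g = h := inv_mul_eq_one.mp this
      simp [← hhg]
    · intro g hg
      have hgne : g ≠ 1 := by
        rintro rfl
        exact hg (subset_closure rfl)
      have : g⁻¹ ∉ ⋂ U ∈ nhds (1 : G), closure U⁻¹ := by
        rw [hE, Set.mem_singleton_iff]
        intro h
        exact hgne (by rw [← inv_inv g, h, inv_one])
      have hex : ∃ U ∈ nhds (1 : G), g⁻¹ ∉ closure U⁻¹ := by
        by_contra hcon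
        push_neg at hcon
        exact this (Set.mem_iInter₂.mpr hcon)
      obtain ⟨U, hU, hgU⟩ := hex
      set S : Set G := (closure U⁻¹)ᶜ with hS
      have hSopen : IsOpen S := isClosed_closure.isOpen_compl
      have hgS : g⁻¹ ∈ S := hgU
      refine ⟨U ∩ (fun y : G => g * y) '' S, Filter.inter_mem hU ?_, ?_⟩
      · exact (hopen g S hSopen).mem_nhds ⟨g⁻¹, hgS, by group⟩
      · rintro ⟨v₁, ⟨hv₁U, s, hsS, rfl⟩, v₂, ⟨hv₂U, _⟩, hprod⟩
        have hv2 : v₂ = s⁻¹ := by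
          have h1 : g * (s * v₂) = g * 1 := by
            rw [mul_one, ← mul_assoc]; exact hprod
          exact eq_inv_of_mul_eq_one_right (mul_left_cancel h1)
        have : s ∈ U⁻¹ := by rw [Set.mem_inv, ← hv2]; exact hv₂U
        exact hsS (subset_closure this)
end

section
/- Let G be a semitopological group and let E_G = ⋂_{U ∈ 𝒩_e} cl(U⁻¹). Then E_G = {e} if and only if the set S_G = {(x, y) ∈ G × G : xy = e} is closed in G × G with the product topology. -/
open Pointwise Filter Set

section Aux

variable {G : Type*} [Group G] [TopologicalSpace G]

private def leftHomeo (hl : ∀ g : G, Continuous fun x : G => g * x) (g : G) : G ≃ₜ G where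
  toFun := fun x => g * x
  invFun := fun x => g⁻¹ * x
  left_inv := fun x => by group
  right_inv := fun x => by group
  continuous_toFun := hl g
  continuous_invFun := hl g⁻¹

private def rightHomeo (hr : ∀ g : G, Continuous fun x : G => x * g) (g : G) : G ≃ₜ G where
  toFun := fun x => x * g
  invFun := fun x => x * g⁻¹
  left_inv := fun x => by group
  right_inv := fun x => by group
  continuous_toFun := hr g
  continuous_invFun := hr g⁻¹

private lemma nhds_eq_map_left (hl : ∀ g : G, Continuous fun x : G => g * x) (g : G) :
    nhds g = Filter.map (fun x : G => g * x) (nhds 1) := by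
  have := (leftHomeo hl g).map_nhds_eq 1
  simp only [leftHomeo, Homeomorph.homeomorph_mk_coe, Equiv.coe_fn_mk, mul_one] at this
  exact this.symm

private lemma nhds_eq_map_right (hr : ∀ g : G, Continuous fun x : G => x * g) (g : G) :
    nhds g = Filter.map (fun x : G => x * g) (nhds 1) := by
  have := (rightHomeo hr g).map_nhds_eq 1
  simp only [rightHomeo, Homeomorph.homeomorph_mk_coe, Equiv.coe_fn_mk, one_mul] at this
  exact this.symm

private lemma mem_closure_iff_right (hr : ∀ g : G, Continuous fun x : G => x * g)
    (s : Set G) (z : G) :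
    z ∈ closure s ↔ ∀ V ∈ nhds (1 : G), ∃ v ∈ V, v * z ∈ s := by
  rw [mem_closure_iff_nhds, nhds_eq_map_right hr z]
  constructor
  · intro h V hV
    obtain ⟨w, hw1, hw2⟩ := h ((fun v : G => v * z) '' V) (image_mem_map hV)
    obtain ⟨v, hv, rfl⟩ := hw1
    exact ⟨v, hv, hw2⟩
  · intro h W hW
    rw [Filter.mem_map] at hW
    obtain ⟨v, hv, hvs⟩ := h _ hW
    exact ⟨v * z, hv, hvs⟩

private lemma mem_closure_S (hl : ∀ g : G, Continuous fun x : G => g * x)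
    (hr : ∀ g : G, Continuous fun x : G => x * g) (x y : G) :
    (x, y) ∈ closure {p : G × G | p.1 * p.2 = 1} ↔
      ∀ U ∈ nhds (1 : G), ∀ V ∈ nhds (1 : G),
        ∃ u ∈ U, ∃ v ∈ V, (x * u) * (v * y) = 1 := by
  have hmap : nhds (x, y) =
      Filter.map (fun p : G × G => (x * p.1, p.2 * y)) (nhds (1 : G) ×ˢ nhds (1 : G)) := by
    rw [nhds_prod_eq, nhds_eq_map_left hl x, nhds_eq_map_right hr y]
    exact (Filter.prod_map_map_eq (m₁ := fun a : G => x * a) (m₂ := fun b : G => b * y)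
      (f₁ := nhds 1) (f₂ := nhds 1))
  rw [mem_closure_iff_nhds, hmap]
  constructor
  · intro h U hU V hV
    obtain ⟨w, hw1, hw2⟩ :=
      h ((fun p : G × G => (x * p.1, p.2 * y)) '' (U ×ˢ V))
        (image_mem_map (prod_mem_prod hU hV))
    obtain ⟨⟨u, v⟩, ⟨hu, hv⟩, rfl⟩ := hw1
    exact ⟨u, hu, v, hv, hw2⟩
  · intro h W hW
    rw [Filter.mem_map, Filter.mem_prod_iff] at hW
    obtain ⟨U, hU, V, hV, hUV⟩ := hW
    obtain ⟨u, hu, v, hv, huv⟩ := h U hU V hV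
    have hmemW : (x * u, v * y) ∈ W := hUV (Set.mk_mem_prod hu hv)
    exact ⟨(x * u, v * y), hmemW, huv⟩

private lemma closure_S_eq (hl : ∀ g : G, Continuous fun x : G => g * x)
    (hr : ∀ g : G, Continuous fun x : G => x * g) :
    closure {p : G × G | p.1 * p.2 = 1} =
      {p : G × G | p.2 * p.1 ∈ ⋂ U ∈ nhds (1 : G), closure U⁻¹} := by
  ext ⟨x, y⟩
  rw [mem_closure_S hl hr, Set.mem_setOf_eq, Set.mem_iInter₂]
  constructor
  · intro h U hU
    rw [mem_closure_iff_right hr]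
    intro V hV
    obtain ⟨u, hu, v, hv, huv⟩ := h U hU V hV
    refine ⟨v, hv, ?_⟩
    have h2 : x * u = (v * y)⁻¹ := eq_inv_of_mul_eq_one_left huv
    have hu' : u = x⁻¹ * (v * y)⁻¹ := by rw [← h2]; group
    have hkey : v * (y * x) = u⁻¹ := by rw [hu']; group
    rw [hkey]
    exact Set.inv_mem_inv.mpr hu
  · intro h U hU V hV
    have := h U hU
    rw [mem_closure_iff_right hr] at this
    obtain ⟨v, hv, hvU⟩ := this V hV
    refine ⟨(v * (y * x))⁻¹, ?_, v, hv, by group⟩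
    exact Set.mem_inv.mp hvU

end Aux

theorem E_eq_one_iff_S_closed {G : Type*} [Group G] [TopologicalSpace G]
    (hl : ∀ g : G, Continuous fun x : G => g * x)
    (hr : ∀ g : G, Continuous fun x : G => x * g) :
    ⋂ U ∈ nhds (1 : G), closure U⁻¹ = ({1} : Set G) ↔
      IsClosed {p : G × G | p.1 * p.2 = 1} := by
  constructor
  · intro hE
    rw [← closure_subset_iff_isClosed, closure_S_eq hl hr]
    rintro ⟨x, y⟩ hxy
    rw [Set.mem_setOf_eq, hE, Set.mem_singleton_iff] at hxy
    have hx : x = y⁻¹ := eq_inv_of_mul_eq_one_right hxy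
    simp [Set.mem_setOf_eq, hx]
  · intro hS
    apply Set.Subset.antisymm
    · intro z hz
      have hmem : ((1 : G), z) ∈ closure {p : G × G | p.1 * p.2 = 1} := by
        rw [closure_S_eq hl hr]
        simpa using hz
      rw [hS.closure_eq] at hmem
      simpa using hmem
    · intro z hz
      rw [Set.mem_singleton_iff] at hz
      subst hz
      rw [Set.mem_iInter₂]
      intro U hU
      exact subset_closure (Set.mem_inv.mpr (by simpa using mem_of_mem_nhds hU))
end

section
/- Let G be a semitopological group and equip G with the topology 𝒯_Sym whose open sets are exactly the sets of the form U ∩ V⁻¹ with U, V open in G. Then (G, 𝒯_Sym) is a quasitopological group: all left and right translations are continuous and the inversion map is continuous. -/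
open Topology Pointwise

theorem sym_quasitopological {G : Type*} [Group G] [t : TopologicalSpace G]
    (hl : ∀ g : G, Continuous fun x : G => g * x)
    (hr : ∀ g : G, Continuous fun x : G => x * g)
    (tSym : TopologicalSpace G)
    (hSym : ∀ s : Set G, IsOpen[tSym] s ↔
      ∃ U V : Set G, IsOpen[t] U ∧ IsOpen[t] V ∧ s = U ∩ V⁻¹) :
    (∀ g : G, Continuous[tSym, tSym] fun x : G => g * x) ∧
      (∀ g : G, Continuous[tSym, tSym] fun x : G => x * g) ∧
      Continuous[tSym, tSym] fun x : G => x⁻¹ := by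
  refine ⟨fun g => continuous_def.2 fun s hs => ?_,
          fun g => continuous_def.2 fun s hs => ?_,
          continuous_def.2 fun s hs => ?_⟩
  · obtain ⟨U, V, hU, hV, rfl⟩ := (hSym s).1 hs
    refine (hSym _).2 ⟨(fun x : G => g * x) ⁻¹' U,
      (fun y : G => y * g⁻¹) ⁻¹' V, @IsOpen.preimage G G t t _ (hl g) U hU,
      @IsOpen.preimage G G t t _ (hr g⁻¹) V hV, ?_⟩
    ext x
    simp [Set.mem_inv, mul_assoc, mul_inv_rev]
  · obtain ⟨U, V, hU, hV, rfl⟩ := (hSym s).1 hs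
    refine (hSym _).2 ⟨(fun x : G => x * g) ⁻¹' U,
      (fun y : G => g⁻¹ * y) ⁻¹' V, @IsOpen.preimage G G t t _ (hr g) U hU,
      @IsOpen.preimage G G t t _ (hl g⁻¹) V hV, ?_⟩
    ext x
    simp [Set.mem_inv, mul_assoc, mul_inv_rev]
  · obtain ⟨U, V, hU, hV, rfl⟩ := (hSym s).1 hs
    refine (hSym _).2 ⟨V, U, hV, hU, ?_⟩
    ext x
    simp [Set.mem_inv, and_comm]
end

section
/- Let G be a paratopological group and equip G with the topology 𝒯_Sym whose open sets are exactly the sets of the form U ∩ V⁻¹ with U, V open in G. Then (G, 𝒯_Sym) is a topological group: multiplication is jointly continuous and inversion is continuous. -/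
open Topology Pointwise

theorem sym_topological_of_paratopological {G : Type*} [Group G] [t : TopologicalSpace G]
    [ContinuousMul G]
    (tSym : TopologicalSpace G)
    (hSym : ∀ s : Set G, IsOpen[tSym] s ↔
      ∃ U V : Set G, IsOpen[t] U ∧ IsOpen[t] V ∧ s = U ∩ V⁻¹) :
    Continuous[@instTopologicalSpaceProd G G tSym tSym, tSym] (fun p : G × G => p.1 * p.2) ∧
      Continuous[tSym, tSym] fun x : G => x⁻¹ := by
  constructor
  letI : TopologicalSpace G := t
  · rw [continuous_def]
    intro s hs
    rw [hSym] at hs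
    obtain ⟨U, V, hU, hV, rfl⟩ := hs
    rw [@isOpen_prod_iff G G tSym tSym]
    rintro a b ⟨habU, habV⟩
    -- a*b ∈ U
    obtain ⟨A, B, hA, hB, haA, hbB, hAB⟩ :=
      (isOpen_prod_iff.1 (continuous_mul.isOpen_preimage U hU)) a b habU
    -- (a*b)⁻¹ = b⁻¹ * a⁻¹ ∈ V
    have hbav : b⁻¹ * a⁻¹ ∈ V := by
      rwa [Set.mem_inv, mul_inv_rev] at habV
    obtain ⟨C, D, hC, hD, hbC, haD, hCD⟩ :=
      (isOpen_prod_iff.1 (continuous_mul.isOpen_preimage V hV)) b⁻¹ a⁻¹ hbav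
    refine ⟨A ∩ D⁻¹, B ∩ C⁻¹, ?_, ?_, ⟨haA, haD⟩, ⟨hbB, hbC⟩, ?_⟩
    · exact (hSym _).2 ⟨A, D, hA, hD, rfl⟩
    · exact (hSym _).2 ⟨B, C, hB, hC, rfl⟩
    · rintro ⟨x, y⟩ ⟨⟨hxA, hxD⟩, ⟨hyB, hyC⟩⟩
      refine ⟨hAB (Set.mk_mem_prod hxA hyB), ?_⟩
      rw [Set.mem_inv, mul_inv_rev]
      exact hCD (Set.mk_mem_prod hyC hxD)
  · rw [continuous_def]
    intro s hs
    rw [hSym] at hs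
    obtain ⟨U, V, hU, hV, rfl⟩ := hs
    refine (hSym _).2 ⟨V, U, hV, hU, ?_⟩
    ext x
    simp only [Set.mem_preimage, Set.mem_inter_iff, Set.mem_inv, inv_inv]
    tauto
end

section
/- Let G be a T1 almost paratopological semitopological group. Then the map j : x ↦ (x, x⁻¹) is a closed embedding of Sym G = (G, 𝒯_Sym) into G × G; that is, j is a homeomorphism onto its image and its image S_G = {(x, y) : xy = e} is closed in G × G. -/
open Topology Pointwise

/-- In a T1 almost paratopological semitopological group, the set of pairs multiplying
to the identity is closed in the product (with the original topology). -/
theorem aux_closed_antidiag {G : Type*} [Group G] [t : TopologicalSpace G] [T1Space G]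
    (hl : ∀ g : G, Continuous fun x : G => g * x)
    (hr : ∀ g : G, Continuous fun x : G => x * g)
    (hG : IsAlmostParatopological G) :
    IsClosed {p : G × G | p.1 * p.2 = 1} := by
  rw [← isOpen_compl_iff, isOpen_prod_iff]
  intro a b hab
  simp only [Set.mem_compl_iff, Set.mem_setOf_eq] at hab
  have hg : (1 : G) ∉ closure ({a⁻¹ * b⁻¹} : Set G) := by
    rw [isClosed_singleton.closure_eq]
    simp only [Set.mem_singleton_iff]
    intro h
    apply hab
    have h1 : b * a = 1 := by
      have := h.symm
      rwa [← mul_inv_rev, inv_eq_one] at this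
    have : a = b⁻¹ := eq_inv_of_mul_eq_one_right h1
    simp [this]
  obtain ⟨U, hU, hUU⟩ := hG _ hg
  obtain ⟨W, hWU, hWopen, hW1⟩ := mem_nhds_iff.1 hU
  refine ⟨(fun x => a⁻¹ * x) ⁻¹' W, (fun x => x * b⁻¹) ⁻¹' W,
    hWopen.preimage (hl a⁻¹), hWopen.preimage (hr b⁻¹),
    by simpa using hW1, by simpa using hW1, ?_⟩
  rintro ⟨x, y⟩ ⟨hx, hy⟩
  simp only [Set.mem_preimage] at hx hy
  simp only [Set.mem_compl_iff, Set.mem_setOf_eq]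
  intro hxy
  apply hUU
  apply Set.mul_subset_mul hWU hWU
  have heq : (a⁻¹ * x) * (y * b⁻¹) = a⁻¹ * b⁻¹ := by
    rw [mul_assoc, ← mul_assoc x y, hxy, one_mul]
  exact heq ▸ Set.mul_mem_mul hx hy

theorem sym_closedEmbedding {G : Type*} [Group G] [t : TopologicalSpace G] [T1Space G]
    (hl : ∀ g : G, Continuous fun x : G => g * x)
    (hr : ∀ g : G, Continuous fun x : G => x * g)
    (hG : IsAlmostParatopological G)
    (tSym : TopologicalSpace G)
    (hSym : ∀ s : Set G, IsOpen[tSym] s ↔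
      ∃ U V : Set G, IsOpen[t] U ∧ IsOpen[t] V ∧ s = U ∩ V⁻¹) :
    @IsClosedEmbedding G (G × G) tSym _ (fun x : G => (x, x⁻¹)) ∧
      Set.range (fun x : G => (x, x⁻¹)) = {p : G × G | p.1 * p.2 = 1} := by
  -- the range is the "antidiagonal"
  have hrange : Set.range (fun x : G => (x, x⁻¹)) = {p : G × G | p.1 * p.2 = 1} := by
    ext ⟨a, b⟩
    constructor
    · rintro ⟨x, hx⟩
      simp only [Prod.mk.injEq] at hx
      obtain ⟨rfl, rfl⟩ := hx
      simp
    · intro h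
      have hb : b = a⁻¹ := eq_inv_of_mul_eq_one_right h
      exact ⟨a, by simp [hb]⟩
  -- every t-open set is tSym-open
  have hto : ∀ U : Set G, IsOpen[t] U → IsOpen[tSym] U := fun U hU =>
    (hSym U).2 ⟨U, Set.univ, hU, @isOpen_univ G t, by simp⟩
  have htle : tSym ≤ t := TopologicalSpace.le_def.2 fun U hU => hto U hU
  -- the (tSym)-product topology is finer than the (t)-product topology
  have hle2 : (instTopologicalSpaceProd : TopologicalSpace (G × G)) ≤
      @instTopologicalSpaceProd G G t t :=
    inf_le_inf (induced_mono htle) (induced_mono htle)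
  have hclosed : IsClosed {p : G × G | p.1 * p.2 = 1} :=
    (aux_closed_antidiag (t := t) hl hr hG).mono hle2
  -- injectivity
  have hinj : Function.Injective (fun x : G => (x, x⁻¹)) := fun x y h =>
    congrArg Prod.fst h
  -- tSym is induced by the map into the (tSym)-product
  have hind : tSym =
      TopologicalSpace.induced (fun x : G => (x, x⁻¹)) instTopologicalSpaceProd := by
    apply TopologicalSpace.ext_iff.2
    intro s
    constructor
    · intro hs
      obtain ⟨U, V, hU, hV, rfl⟩ := (hSym s).1 hs
      rw [isOpen_induced_iff]
      refine ⟨U ×ˢ V, (hto U hU).prod (hto V hV), ?_⟩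
      ext x
      simp [Set.mem_inv]
    · intro hs
      obtain ⟨T, hT, rfl⟩ := isOpen_induced_iff.1 hs
      rw [isOpen_iff_forall_mem_open]
      intro x hx
      obtain ⟨P, Q, hP, hQ, hxP, hxQ, hPQ⟩ := (isOpen_prod_iff.1 hT) x x⁻¹ hx
      obtain ⟨A, B, hA, hB, rfl⟩ := (hSym P).1 hP
      obtain ⟨C, D, hC, hD, rfl⟩ := (hSym Q).1 hQ
      refine ⟨(A ∩ D) ∩ (B ∩ C)⁻¹, ?_, (hSym _).2 ⟨A ∩ D, B ∩ C, t.isOpen_inter _ _ hA hD, t.isOpen_inter _ _ hB hC, rfl⟩, ?_⟩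
      · rintro y ⟨⟨hyA, hyD⟩, hyBC⟩
        rw [Set.mem_inv] at hyBC
        exact hPQ (Set.mk_mem_prod ⟨hyA, Set.mem_inv.2 hyBC.1⟩
          ⟨hyBC.2, Set.mem_inv.2 (by simpa using hyD)⟩)
      · refine ⟨⟨hxP.1, ?_⟩, Set.mem_inv.2 ⟨Set.mem_inv.1 hxP.2, hxQ.1⟩⟩
        have := hxQ.2
        rw [Set.mem_inv] at this
        simpa using this
  refine ⟨⟨⟨⟨hind⟩, hinj⟩, ?_⟩, hrange⟩
  rw [hrange]
  exact hclosed
end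

section
/- Let G be a T1 almost paratopological semitopological group. Then Sym G = (G, 𝒯_Sym) is a Hausdorff quasitopological group: the topology 𝒯_Sym is Hausdorff, all left and right translations are 𝒯_Sym-continuous, and inversion is 𝒯_Sym-continuous. -/
open Topology Pointwise

/-!
The symmetrized topology is `t ⊓ t.induced (·⁻¹)`, so a map into it is continuous iff both it and
its composite with inversion are `t`-continuous; translations pass this test because inversion
turns a left translation into a right one and vice versa. For Hausdorffness, take `U ∈ 𝓝 1` with
`x⁻¹ * y ∉ U * U`: no `z` has both `x⁻¹ * z ∈ U` and `z⁻¹ * y ∈ U`, so already the `t`-neighborhood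
`x • U` of `x` and the inverse `(U * y⁻¹)⁻¹` of a `t`-neighborhood of `y⁻¹` are disjoint.
-/

open Filter

section Inv

variable {G : Type*} [Inv G] (t : TopologicalSpace G)

theorem eq_inf_induced_inv_of_isOpen_iff (tSym : TopologicalSpace G)
    (hSym : ∀ s : Set G, IsOpen[tSym] s ↔ ∃ U V : Set G, IsOpen[t] U ∧ IsOpen[t] V ∧ s = U ∩ V⁻¹) :
    tSym = t ⊓ t.induced (·⁻¹) := by
  refine le_antisymm (le_inf ?_ ?_) ?_
  · refine TopologicalSpace.le_def.2 fun U hU =>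
      (hSym U).2 ⟨U, Set.univ, hU, @isOpen_univ G t, by simp⟩
  · rintro _ ⟨V, hV, rfl⟩
    exact (hSym _).2 ⟨Set.univ, V, @isOpen_univ G t, hV, by simp [Set.inv_preimage]⟩
  · intro s hs
    obtain ⟨U, V, hU, hV, rfl⟩ := (hSym s).1 hs
    exact @IsOpen.inter G (t ⊓ t.induced (·⁻¹)) _ _
      (inf_le_left (b := t.induced (·⁻¹)) _ hU) (inf_le_right (a := t) _ ⟨V, hV, rfl⟩)

variable {t}

theorem continuous_inf_induced_inv_iff {f : G → G} :
    Continuous[t ⊓ t.induced (·⁻¹), t ⊓ t.induced (·⁻¹)] f ↔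
      Continuous[t ⊓ t.induced (·⁻¹), t] f ∧ Continuous[t ⊓ t.induced (·⁻¹), t] ((·⁻¹) ∘ f) :=
  continuous_inf_rng.trans (and_congr_right' continuous_induced_rng)

theorem continuous_inf_induced_inv_of_inv_comp_eq {f h : G → G} (hf : Continuous[t, t] f)
    (hh : Continuous[t, t] h) (hfh : (·⁻¹) ∘ f = h ∘ (·⁻¹)) :
    Continuous[t ⊓ t.induced (·⁻¹), t ⊓ t.induced (·⁻¹)] f := by
  refine continuous_inf_induced_inv_iff.2 ⟨continuous_inf_dom_left hf, hfh ▸ ?_⟩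
  exact continuous_inf_dom_right
    (@Continuous.comp _ _ _ (t.induced (·⁻¹)) t t _ _ hh continuous_induced_dom)

end Inv

theorem continuous_inv_inf_induced_inv {G : Type*} [InvolutiveInv G] {t : TopologicalSpace G} :
    Continuous[t ⊓ t.induced (·⁻¹), t ⊓ t.induced (·⁻¹)] (·⁻¹) := by
  refine continuous_inf_induced_inv_iff.2
    ⟨continuous_inf_dom_right (@continuous_induced_dom _ _ (·⁻¹) t), ?_⟩
  have : ((·⁻¹) ∘ (·⁻¹) : G → G) = id := funext inv_inv
  exact this ▸ continuous_inf_dom_left (@continuous_id G t)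

section Group

variable {G : Type*} [Group G] [t : TopologicalSpace G]

theorem disjoint_nhds_comap_inv_nhds_inv (hl : ∀ g : G, Continuous (g * ·))
    (hr : ∀ g : G, Continuous (· * g)) {x y : G} {U : Set G} (hU : U ∈ 𝓝 1)
    (hxy : x⁻¹ * y ∉ U * U) : Disjoint (𝓝 x) (comap (·⁻¹) (𝓝 y⁻¹)) := by
  have hxU : (x⁻¹ * ·) ⁻¹' U ∈ 𝓝 x :=
    (hl x⁻¹).continuousAt.preimage_mem_nhds (by simpa using hU)
  have hyU : (· * y) ⁻¹' U ∈ 𝓝 y⁻¹ :=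
    (hr y).continuousAt.preimage_mem_nhds (by simpa using hU)
  refine disjoint_of_disjoint_of_mem (Set.disjoint_left.2 fun z hz hz' => hxy ?_) hxU
    (preimage_mem_comap hyU)
  exact ⟨_, hz, _, hz', by group⟩

theorem t2Space_inf_induced_inv [T1Space G] (hl : ∀ g : G, Continuous (g * ·))
    (hr : ∀ g : G, Continuous (· * g)) (hG : IsAlmostParatopological G) :
    @T2Space G (t ⊓ t.induced (·⁻¹)) := by
  refine (@t2Space_iff_disjoint_nhds G (t ⊓ t.induced (·⁻¹))).2 fun x y hxy => ?_
  obtain ⟨U, hU, hxyU⟩ := hG (x⁻¹ * y) (by simpa [eq_comm, inv_mul_eq_one] using hxy)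
  rw [nhds_inf, nhds_inf, nhds_induced, nhds_induced]
  exact (disjoint_nhds_comap_inv_nhds_inv hl hr hU hxyU).mono inf_le_left inf_le_right

end Group

theorem sym_hausdorff_quasitopological {G : Type*} [Group G] [t : TopologicalSpace G]
    [T1Space G]
    (hl : ∀ g : G, Continuous fun x : G => g * x)
    (hr : ∀ g : G, Continuous fun x : G => x * g)
    (hG : IsAlmostParatopological G)
    (tSym : TopologicalSpace G)
    (hSym : ∀ s : Set G, IsOpen[tSym] s ↔
      ∃ U V : Set G, IsOpen[t] U ∧ IsOpen[t] V ∧ s = U ∩ V⁻¹) :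
    @T2Space G tSym ∧
      (∀ g : G, Continuous[tSym, tSym] fun x : G => g * x) ∧
      (∀ g : G, Continuous[tSym, tSym] fun x : G => x * g) ∧
      Continuous[tSym, tSym] fun x : G => x⁻¹ := by
  obtain rfl := eq_inf_induced_inv_of_isOpen_iff t tSym hSym
  refine ⟨t2Space_inf_induced_inv hl hr hG, fun g => ?_, fun g => ?_, continuous_inv_inf_induced_inv⟩
  · exact continuous_inf_induced_inv_of_inv_comp_eq (hl g) (hr g⁻¹) (funext (mul_inv_rev g))
  · exact continuous_inf_induced_inv_of_inv_comp_eq (hr g) (hl g⁻¹) (funext (mul_inv_rev · g))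
end

section
/- Every compact almost paratopological semitopological group is a topological group; that is, if G is a semitopological group whose topology is compact and G is almost paratopological, then multiplication G × G → G is jointly continuous and inversion x ↦ x⁻¹ is continuous. -/
/-!
Let `N` be the set of points specializing to `1`, i.e. the intersection of the neighbourhoods
of `1`. In any semitopological group `N` is closed under products. It is also closed under
inverses here: for `z ∈ N` and a neighbourhood `U` of `1`, Birkhoff recurrence in the compact
space `G` puts some `z⁻¹ ^ (n + 1)` into `U`, so `z⁻¹ = z⁻¹ ^ (n + 1) * z ^ n ∈ U * U`, and almost
paratopology gives `z⁻¹ ∈ N`. The same trick shows that every cluster point of `x⁻¹` as `x → 1`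
lies in `N`, so by compactness inversion is continuous at `1`.

Then `G` is R₁, hence, being compact, normal and completely regular: every neighbourhood `W` of
`1` carries a continuous `F` with `F 1 = 0` and `F = 1` off `W`. A Namioka-type fragmentability
argument for `(x, t) ↦ F (x * t)` gives a neighbourhood `V` of `1` with `|F (v * s) - F s| < 1/2`
for `v ∈ V`, whence `V * V ⊆ W`: multiplication is continuous at `(1, 1)`.
-/

open Pointwise

open Filter Set Topology Function

section Recurrence

variable {X : Type*} [TopologicalSpace X] [CompactSpace X]

theorem exists_minimal_nonempty_isClosed_mapsTo [Nonempty X] (f : X → X) :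
    ∃ M : Set X, Minimal (fun M : Set X => M.Nonempty ∧ IsClosed M ∧ MapsTo f M M) M := by
  let S := {M : Set X | M.Nonempty ∧ IsClosed M ∧ MapsTo f M M}
  have hchain : ∀ c ⊆ S, IsChain (· ⊆ ·) c → c.Nonempty → ∃ lb ∈ S, ∀ M ∈ c, lb ⊆ M := by
    rintro c hc hchain ⟨M₀, hM₀⟩
    have : Nonempty c := ⟨⟨M₀, hM₀⟩⟩
    have hne : (⋂ M : c, (M : Set X)).Nonempty :=
      IsCompact.nonempty_iInter_of_directed_nonempty_isCompact_isClosed _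
        (fun i j => (hchain.total i.2 j.2).elim (fun h => ⟨i, subset_rfl, h⟩)
          fun h => ⟨j, h, subset_rfl⟩)
        (fun M => (hc M.2).1) (fun M => (hc M.2).2.1.isCompact) fun M => (hc M.2).2.1
    exact ⟨⋂₀ c, ⟨sInter_eq_iInter ▸ hne, isClosed_sInter fun M hM => (hc hM).2.1,
      fun x hx M hM => (hc hM).2.2 (hx M hM)⟩, fun M hM => sInter_subset_of_mem hM⟩
  obtain ⟨M, -, hM⟩ := zorn_superset_nonempty S hchain univ
    ⟨univ_nonempty, isClosed_univ, mapsTo_univ f univ⟩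
  exact ⟨M, hM⟩

/-- Birkhoff recurrence: every point of a minimal closed invariant set returns to its
neighbourhoods. -/
theorem exists_mem_closure_range_iterate_succ [Nonempty X] {f : X → X} (hf : Continuous f) :
    ∃ x, x ∈ closure (range fun n => f^[n + 1] x) := by
  obtain ⟨M, hmin⟩ := exists_minimal_nonempty_isClosed_mapsTo f
  obtain ⟨⟨x, hx⟩, hMc, hMf⟩ := hmin.prop
  have hmaps : MapsTo f (range fun n => f^[n + 1] x) (range fun n => f^[n + 1] x) := by
    rintro - ⟨n, rfl⟩
    exact ⟨n + 1, iterate_succ_apply' f (n + 1) x⟩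
  have hsub : closure (range fun n => f^[n + 1] x) ⊆ M :=
    closure_minimal (range_subset_iff.2 fun n => hMf.iterate (n + 1) hx) hMc
  have hM : closure (range fun n => f^[n + 1] x) = M :=
    hmin.eq_of_le ⟨⟨_, subset_closure ⟨0, rfl⟩⟩, isClosed_closure, hmaps.closure hf⟩ hsub
  exact ⟨x, hM ▸ hx⟩

end Recurrence

section SemitopologicalGroup

variable {G : Type*} [Group G] [TopologicalSpace G] [SeparatelyContinuousMul G]

theorem mul_specializes_one {a b : G} (ha : a ⤳ 1) (hb : b ⤳ 1) : (a * b) ⤳ 1 :=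
  (mul_one a ▸ hb.map (continuous_const_mul a)).trans ha

theorem pow_specializes_one {a : G} (ha : a ⤳ 1) (n : ℕ) : (a ^ n) ⤳ 1 := by
  induction n with
  | zero => exact pow_zero a ▸ specializes_rfl
  | succ n ih => exact pow_succ a n ▸ mul_specializes_one ih ha

theorem one_mem_closure_range_pow_succ [CompactSpace G] (z : G) :
    (1 : G) ∈ closure (range fun n : ℕ => z ^ (n + 1)) := by
  obtain ⟨c, hc⟩ := exists_mem_closure_range_iterate_succ (continuous_const_mul z)
  simp only [mul_left_iterate_apply] at hc
  have hmaps : MapsTo (· * c⁻¹) (range fun n : ℕ => z ^ (n + 1) * c)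
      (range fun n : ℕ => z ^ (n + 1)) := by
    rintro - ⟨n, rfl⟩
    exact ⟨n, (mul_inv_cancel_right _ c).symm⟩
  simpa using map_mem_closure (continuous_mul_const c⁻¹) hc hmaps

end SemitopologicalGroup

namespace IsAlmostParatopological

variable {G : Type*} [Group G] [TopologicalSpace G]

theorem specializes_one_of_forall_mem_mul_self (hG : IsAlmostParatopological G) {g : G}
    (h : ∀ U ∈ 𝓝 (1 : G), g ∈ U * U) : g ⤳ 1 := by
  by_contra hg
  obtain ⟨U, hU, hgU⟩ := hG g (specializes_iff_mem_closure.not.1 hg)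
  exact hgU (h U hU)

variable [SeparatelyContinuousMul G] [CompactSpace G]

theorem inv_specializes_one (hG : IsAlmostParatopological G) {a : G} (ha : a ⤳ 1) :
    a⁻¹ ⤳ 1 := by
  refine hG.specializes_one_of_forall_mem_mul_self fun U hU => ?_
  obtain ⟨_, hn, n, rfl⟩ := mem_closure_iff_nhds.1 (one_mem_closure_range_pow_succ a⁻¹) U hU
  have han : a ^ n ∈ U := mem_of_mem_nhds (pow_specializes_one ha n hU)
  exact ⟨_, hn, _, han, by group⟩

theorem tendsto_inv_nhds_one (hG : IsAlmostParatopological G) :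
    Tendsto (fun x : G => x⁻¹) (𝓝 1) (𝓝 1) := by
  refine (isCompact_univ.le_nhdsSet_of_clusterPt (s' := {q | q ⤳ 1}) univ_mem
    fun q _ hq => ?_).trans (nhdsSet_le.2 fun q hq => hq)
  suffices q⁻¹ ⤳ 1 from inv_inv q ▸ hG.inv_specializes_one this
  refine hG.specializes_one_of_forall_mem_mul_self fun U hU => ?_
  have hqU : (q⁻¹ * ·) ⁻¹' U ∈ 𝓝 q :=
    (continuous_const_mul q⁻¹).continuousAt.preimage_mem_nhds (by rwa [inv_mul_cancel])
  obtain ⟨a, ha, haU⟩ := ((mapClusterPt_iff_frequently.1 hq _ hqU).and_eventually hU).exists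
  exact ⟨_, ha, a, haU, by group⟩

theorem specializes_one_or_disjoint_nhds_one (hG : IsAlmostParatopological G) (g : G) :
    g ⤳ 1 ∨ Disjoint (𝓝 g) (𝓝 1) := by
  refine or_iff_not_imp_left.2 fun hg => ?_
  obtain ⟨U, hU, hgU⟩ := hG g (specializes_iff_mem_closure.not.1 hg)
  have hUinv : (g⁻¹ * ·) ⁻¹' U⁻¹ ∈ 𝓝 g :=
    (continuous_const_mul g⁻¹).continuousAt.preimage_mem_nhds
      (by rw [inv_mul_cancel]; exact hG.tendsto_inv_nhds_one hU)
  refine disjoint_of_disjoint_of_mem (disjoint_left.2 fun x hx hxU => hgU ?_) hUinv hU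
  exact ⟨x, hxU, x⁻¹ * g, by simpa using hx, by group⟩

theorem r1Space (hG : IsAlmostParatopological G) : R1Space G where
  specializes_or_disjoint_nhds x y := by
    have hspec : x ⤳ y ↔ (y⁻¹ * x) ⤳ 1 := by
      rw [← (Homeomorph.mulLeft y⁻¹).isInducing.specializes_iff]
      simp
    have hdisj : Disjoint (𝓝 x) (𝓝 y) ↔ Disjoint (𝓝 (y⁻¹ * x)) (𝓝 1) := by
      have hmap := (Homeomorph.mulLeft y⁻¹).map_nhds_eq
      rw [← disjoint_map (Homeomorph.mulLeft y⁻¹).injective, hmap, hmap]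
      simp
    rw [hspec, hdisj]
    exact hG.specializes_one_or_disjoint_nhds_one _

end IsAlmostParatopological

section Fragmentability

variable {X T : Type*} [TopologicalSpace X]

theorem abs_sub_lt_of_floor_div_eq {a b ε : ℝ} (hε : 0 < ε) (h : ⌊a / ε⌋ = ⌊b / ε⌋) :
    |a - b| < ε := by
  have h1 := Int.abs_sub_lt_one_of_floor_eq_floor h
  rwa [← sub_div, abs_div, abs_of_pos hε, div_lt_one hε] at h1

theorem exists_finset_forall_exists_abs_sub_lt [TopologicalSpace T] [CompactSpace T]
    {φ : ℕ → T → ℝ} (hφ : ∀ j, Continuous (φ j)) (m : ℕ) {δ : ℝ} (hδ : 0 < δ) :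
    ∃ P : Finset T, ∀ t, ∃ r ∈ P, ∀ j < m, |φ j t - φ j r| < δ := by
  let B : T → Set T := fun r => ⋂ j ∈ Finset.range m, {t | |φ j t - φ j r| < δ}
  have hB : ∀ r, IsOpen (B r) := fun r =>
    isOpen_biInter_finset fun j _ => isOpen_lt ((hφ j).sub continuous_const).abs continuous_const
  obtain ⟨P, hP⟩ := isCompact_univ.elim_finite_subcover B hB
    fun t _ => mem_iUnion.2 ⟨t, mem_iInter₂.2 fun j _ => by simpa using hδ⟩
  exact ⟨P, fun t => by simpa [B] using hP (mem_univ t)⟩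

/-- The open sets where one of the first `m` functions `φ j` separates the two coordinates by more
than `1 / (m + 1)` increase and cover the compact set where `ψ` separates them by `ε`. -/
theorem exists_forall_abs_sub_lt_of_forall_eq [TopologicalSpace T] [CompactSpace T]
    {φ : ℕ → T → ℝ} (hφ : ∀ j, Continuous (φ j)) {ψ : T → ℝ} (hψ : Continuous ψ)
    (h : ∀ t t', (∀ j, φ j t = φ j t') → ψ t = ψ t') {ε : ℝ} (hε : 0 < ε) :
    ∃ m : ℕ, ∀ t t', (∀ j < m, |φ j t - φ j t'| ≤ 1 / (m + 1)) → |ψ t - ψ t'| < ε := by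
  let O : ℕ → Set (T × T) := fun m => {p | ∃ j, j < m ∧ 1 / ((m : ℝ) + 1) < |φ j p.1 - φ j p.2|}
  have hO : ∀ m, IsOpen (O m) := fun m => by
    simp only [O, ofPred_exists, ofPred_and]
    exact isOpen_iUnion fun j => isOpen_const.inter (isOpen_lt continuous_const
      (((hφ j).comp continuous_fst).sub ((hφ j).comp continuous_snd)).abs)
  have hOmono : Monotone O := monotone_nat_of_le_succ fun m p ⟨j, hj, hp⟩ =>
    ⟨j, hj.trans m.lt_succ_self, lt_of_le_of_lt (by gcongr; simp) hp⟩
  have hK : IsCompact {p : T × T | ε ≤ |ψ p.1 - ψ p.2|} := (isClosed_le continuous_const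
    ((hψ.comp continuous_fst).sub (hψ.comp continuous_snd)).abs).isCompact
  have hcover : {p : T × T | ε ≤ |ψ p.1 - ψ p.2|} ⊆ ⋃ m, O m := fun p hp => by
    obtain ⟨j, hj⟩ : ∃ j, φ j p.1 ≠ φ j p.2 := by
      by_contra! hφp
      exact hε.not_ge (by simpa [h _ _ hφp] using hp)
    obtain ⟨n, hn⟩ := exists_nat_one_div_lt (abs_sub_pos.2 hj)
    refine mem_iUnion.2 ⟨max (j + 1) n, j, by omega, lt_of_le_of_lt ?_ hn⟩
    gcongr
    exact_mod_cast le_max_right _ _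
  obtain ⟨m, hm⟩ := hK.elim_directed_cover O hO hcover hOmono.directed_le
  refine ⟨m, fun t t' htt' => lt_of_not_ge fun hε' => ?_⟩
  obtain ⟨j, hj, hlt⟩ := hm (show (t, t') ∈ {p : T × T | ε ≤ |ψ p.1 - ψ p.2|} from hε')
  exact (htt' j hj).not_gt hlt

/-- The code of `x` is a modulus `m` for `f x` from `exists_forall_abs_sub_lt_of_forall_eq` and the
values of `f x` on a finite net for the first `m` functions `f (w j)`, rounded down to multiples
of `ε`. -/
theorem exists_code_abs_sub_lt_of_mem_closure_range [TopologicalSpace T] [CompactSpace T]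
    {f : X → T → ℝ} (hX : ∀ t, Continuous (f · t)) (hT : ∀ x, Continuous (f x)) (w : ℕ → X)
    {ε : ℝ} (hε : 0 < ε) : ∃ c : X → ℕ × List ℤ, ∀ x ∈ closure (range w), ∀ y ∈ closure (range w),
      c x = c y → ∀ t, |f x t - f y t| < 3 * ε := by
  have hmod : ∀ x, ∃ m : ℕ, x ∈ closure (range w) → ∀ t t',
      (∀ j < m, |f (w j) t - f (w j) t'| ≤ 1 / (m + 1)) → |f x t - f x t'| < ε := fun x => by
    by_cases hx : x ∈ closure (range w)
    · have hfib : ∀ t t', (∀ j, f (w j) t = f (w j) t') → f x t = f x t' := fun t t' htt' =>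
        (isClosed_eq (hX t) (hX t')).closure_subset_iff.2 (range_subset_iff.2 htt') hx
      obtain ⟨m, hm⟩ := exists_forall_abs_sub_lt_of_forall_eq (fun j => hT (w j)) (hT x) hfib hε
      exact ⟨m, fun _ => hm⟩
    · exact ⟨0, fun h => absurd h hx⟩
  choose m hm using hmod
  choose P hP using fun k : ℕ =>
    exists_finset_forall_exists_abs_sub_lt (fun j => hT (w j)) k (δ := 1 / (k + 1)) (by positivity)
  refine ⟨fun x => (m x, (P (m x)).toList.map fun r => ⌊f x r / ε⌋), fun x hx y hy hxy t => ?_⟩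
  obtain ⟨hmxy, hfloor⟩ := Prod.mk.inj hxy
  rw [← hmxy, List.map_inj_left] at hfloor
  obtain ⟨r, hr, hrt⟩ := hP (m x) t
  have hx' := hm x hx t r fun j hj => (hrt j hj).le
  have hy' := hm y hy t r (hmxy ▸ fun j hj => (hrt j hj).le)
  have hxy' := abs_sub_lt_of_floor_div_eq hε (hfloor r (Finset.mem_toList.2 hr))
  linarith [abs_sub_le (f x t) (f x r) (f y t), abs_sub_le (f x r) (f y r) (f y t),
    abs_sub_comm (f y r) (f y t)]

theorem exists_isOpen_pair_le_abs_sub {f : X → T → ℝ} (hX : ∀ t, Continuous (f · t))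
    {W : Set X} (hW : IsOpen W) {u u' : X} (hu : u ∈ W) (hu' : u' ∈ W) (t : T) {δ : ℝ}
    (hδ : 0 < δ) : ∃ W₀ W₁ : Set X, IsOpen W₀ ∧ W₀.Nonempty ∧ W₀ ⊆ W ∧ IsOpen W₁ ∧
      W₁.Nonempty ∧ W₁ ⊆ W ∧
      ∀ x ∈ closure W₀, ∀ y ∈ closure W₁, |f u t - f u' t| - 2 * δ ≤ |f x t - f y t| := by
  have hcont : ∀ v, Continuous fun x => |f x t - f v t| := fun v =>
    ((hX t).sub continuous_const).abs
  have hclosure : ∀ v, closure (W ∩ {x | |f x t - f v t| < δ}) ⊆ {x | |f x t - f v t| ≤ δ} :=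
    fun v => closure_minimal (fun x hx => le_of_lt (mem_ofPred.1 hx.2))
      (isClosed_le (hcont v) continuous_const)
  refine ⟨W ∩ {x | |f x t - f u t| < δ}, W ∩ {x | |f x t - f u' t| < δ},
    hW.inter (isOpen_lt (hcont u) continuous_const), ⟨u, hu, by simpa using hδ⟩,
    inter_subset_left, hW.inter (isOpen_lt (hcont u') continuous_const),
    ⟨u', hu', by simpa using hδ⟩, inter_subset_left, fun x hx y hy => ?_⟩
  have hxu : |f x t - f u t| ≤ δ := hclosure u hx
  have hyu : |f y t - f u' t| ≤ δ := hclosure u' hy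
  linarith [abs_sub_le (f u t) (f x t) (f u' t), abs_sub_le (f x t) (f y t) (f u' t),
    abs_sub_comm (f u t) (f x t)]

/-- A Cantor scheme of nonempty open sets: compactness provides a point on each branch, inside the
closure of a countable set of witnesses. -/
theorem exists_pairwise_of_forall_isOpen_split [CompactSpace X] [Nonempty X] {R : X → X → Prop}
    (hR : ∀ x y, R x y → R y x)
    (split : ∀ W : Set X, IsOpen W → W.Nonempty → ∃ W₀ W₁ : Set X, IsOpen W₀ ∧ W₀.Nonempty ∧
      W₀ ⊆ W ∧ IsOpen W₁ ∧ W₁.Nonempty ∧ W₁ ⊆ W ∧ ∀ x ∈ closure W₀, ∀ y ∈ closure W₁, R x y) :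
    ∃ (w : ℕ → X) (x : (ℕ → Bool) → X), (∀ β, x β ∈ closure (range w)) ∧
      Pairwise fun β β' => R (x β) (x β') := by
  let S := {W : Set X // IsOpen W ∧ W.Nonempty}
  have hsplit : ∀ W : S, ∃ C : Bool → S, (∀ b, (C b).1 ⊆ W.1) ∧
      ∀ x ∈ closure (C false).1, ∀ y ∈ closure (C true).1, R x y := fun W => by
    obtain ⟨W₀, W₁, hW₀, hne₀, hsub₀, hW₁, hne₁, hsub₁, hsep⟩ := split W.1 W.2.1 W.2.2
    exact ⟨fun b => bif b then ⟨W₁, hW₁, hne₁⟩ else ⟨W₀, hW₀, hne₀⟩,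
      fun b => by cases b <;> assumption, hsep⟩
  choose child hchild hsep using hsplit
  let node : List Bool → S := List.foldl child ⟨univ, isOpen_univ, univ_nonempty⟩
  let branch : (ℕ → Bool) → ℕ → List Bool := fun β k => (List.range k).map β
  have node_succ : ∀ β k, node (branch β (k + 1)) = child (node (branch β k)) (β k) := by
    simp [node, branch, List.range_succ]
  have node_anti : ∀ β, Antitone fun k => (node (branch β k)).1 := fun β =>
    antitone_nat_of_succ_le fun k => node_succ β k ▸ hchild _ _
  obtain ⟨e, he⟩ := exists_surjective_nat (List Bool)
  let w : ℕ → X := fun n => (node (e n)).2.2.some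
  have hcluster : ∀ β, ∃ x, (∀ k, x ∈ closure (node (branch β k)).1) ∧ x ∈ closure (range w) := by
    intro β
    obtain ⟨x, hx⟩ := exists_clusterPt_of_compactSpace
      (map (fun k => (node (branch β k)).2.2.some) atTop)
    refine ⟨x, fun k => isClosed_closure.mem_of_mapClusterPt hx (eventually_atTop.2 ⟨k, fun l hl =>
      subset_closure (node_anti β hl (node (branch β l)).2.2.some_mem)⟩), ?_⟩
    refine isClosed_closure.mem_of_mapClusterPt hx (Eventually.of_forall fun k => ?_)
    obtain ⟨n, hn⟩ := he (branch β k)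
    exact subset_closure ⟨n, by simp only [w, hn]⟩
  choose x hxnode hxw using hcluster
  refine ⟨w, x, hxw, fun β β' hne => ?_⟩
  have hdiff : ∃ k, β k ≠ β' k := not_forall.1 fun h => hne (funext h)
  obtain ⟨k, hk, hagree⟩ : ∃ k, β k ≠ β' k ∧ ∀ j < k, β j = β' j :=
    ⟨Nat.find hdiff, Nat.find_spec hdiff, fun j hj => not_not.1 (Nat.find_min hdiff hj)⟩
  have hbranch : branch β k = branch β' k :=
    List.map_congr_left fun j hj => hagree j (List.mem_range.1 hj)
  have hx := hxnode β (k + 1)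
  have hx' := hxnode β' (k + 1)
  rw [node_succ] at hx hx'
  rw [← hbranch, Bool.eq_not.2 hk.symm] at hx'
  cases hb : β k <;> simp only [hb, Bool.not_false, Bool.not_true] at hx hx'
  · exact hsep _ _ hx _ hx'
  · exact hR _ _ (hsep _ _ hx' _ hx)

/-- Otherwise the Cantor scheme produces continuum many functions `f x` that are pairwise
`3 ε / 5` apart in sup norm, yet fall into countably many classes of oscillation `< 3 ε / 5`. -/
theorem exists_isOpen_forall_abs_sub_lt [CompactSpace X] [Nonempty X] [TopologicalSpace T]
    [CompactSpace T] {f : X → T → ℝ} (hX : ∀ t, Continuous (f · t))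
    (hT : ∀ x, Continuous (f x)) {ε : ℝ} (hε : 0 < ε) :
    ∃ U : Set X, IsOpen U ∧ U.Nonempty ∧ ∀ x ∈ U, ∀ y ∈ U, ∀ t, |f x t - f y t| < ε := by
  by_contra! h
  have hδ : 0 < ε / 5 := by positivity
  obtain ⟨w, x, hxw, hsep⟩ := exists_pairwise_of_forall_isOpen_split
    (R := fun x y => ∃ t, 3 * (ε / 5) ≤ |f x t - f y t|)
    (fun x y ⟨t, ht⟩ => ⟨t, abs_sub_comm (f x t) (f y t) ▸ ht⟩) fun W hW hne => by
      obtain ⟨u, hu, u', hu', t, ht⟩ := h W hW hne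
      obtain ⟨W₀, W₁, hW₀, hne₀, hsub₀, hW₁, hne₁, hsub₁, hsep⟩ :=
        exists_isOpen_pair_le_abs_sub hX hW hu hu' t hδ
      exact ⟨W₀, W₁, hW₀, hne₀, hsub₀, hW₁, hne₁, hsub₁, fun x hx y hy =>
        ⟨t, by linarith [hsep x hx y hy]⟩⟩
  obtain ⟨c, hc⟩ := exists_code_abs_sub_lt_of_mem_closure_range hX hT w hδ
  have : Uncountable (ℕ → Bool) := by
    simpa [← Cardinal.aleph0_lt_mk_iff] using Cardinal.aleph0_lt_continuum
  obtain ⟨β, β', hcode, hne⟩ := not_injective_iff.1 (not_injective_uncountable_countable (c ∘ x))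
  obtain ⟨t, ht⟩ := hsep hne
  exact (hc _ (hxw β) _ (hxw β') hcode t).not_ge ht

end Fragmentability

theorem exists_mem_nhds_one_forall_abs_mul_sub_lt {G : Type*} [Group G] [TopologicalSpace G]
    [SeparatelyContinuousMul G] [CompactSpace G] {F : G → ℝ} (hF : Continuous F) {ε : ℝ}
    (hε : 0 < ε) : ∃ V ∈ 𝓝 (1 : G), ∀ v ∈ V, ∀ s, |F (v * s) - F s| < ε := by
  obtain ⟨U, hU, ⟨u, hu⟩, hUF⟩ := exists_isOpen_forall_abs_sub_lt (f := fun x t => F (x * t))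
    (fun t => hF.comp (continuous_mul_const t)) (fun x => hF.comp (continuous_const_mul x)) hε
  refine ⟨(· * u) ⁻¹' U, (continuous_mul_const u).continuousAt.preimage_mem_nhds
    (by simpa using hU.mem_nhds hu), fun v hv s => ?_⟩
  simpa [mul_assoc] using hUF _ hv u hu (u⁻¹ * s)

namespace IsAlmostParatopological

variable {G : Type*} [Group G] [TopologicalSpace G] [SeparatelyContinuousMul G] [CompactSpace G]

theorem tendsto_mul_nhds_one (hG : IsAlmostParatopological G) :
    Tendsto (uncurry ((· * ·) : G → G → G)) (𝓝 1 ×ˢ 𝓝 1) (𝓝 1) := by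
  intro W hW
  have := hG.r1Space
  obtain ⟨F, hF, hF1, hFW⟩ := CompletelyRegularSpace.completely_regular_isOpen (1 : G)
    (interior W) isOpen_interior (mem_interior_iff_mem_nhds.2 hW)
  obtain ⟨V, hV, hVF⟩ := exists_mem_nhds_one_forall_abs_mul_sub_lt
    (continuous_subtype_val.comp hF) (ε := 1 / 2) (by norm_num)
  refine mem_map.2 (mem_of_superset (prod_mem_prod hV hV) fun p ⟨hv, hv'⟩ =>
    by_contra fun (hp : p.1 * p.2 ∉ W) => ?_)
  have h1 : (F (p.1 * p.2) : ℝ) = 1 := by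
    simpa using congrArg Subtype.val (hFW fun h => hp (interior_subset h))
  have h2 := hVF p.1 hv p.2
  have h3 := hVF p.2 hv' 1
  simp only [Function.comp_apply, mul_one, hF1, Set.Icc.coe_zero, sub_zero] at h2 h3
  rw [h1] at h2
  linarith [abs_lt.1 h2, abs_lt.1 h3]

theorem isTopologicalGroup (hG : IsAlmostParatopological G) : IsTopologicalGroup G :=
  .of_nhds_one' hG.tendsto_mul_nhds_one hG.tendsto_inv_nhds_one
    (fun x => by simpa using ((Homeomorph.mulLeft x).map_nhds_eq 1).symm)
    fun x => by simpa using ((Homeomorph.mulRight x).map_nhds_eq 1).symm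

end IsAlmostParatopological

theorem compact_almostParatopological_topologicalGroup {G : Type*} [Group G]
    [TopologicalSpace G] [CompactSpace G]
    (hl : ∀ g : G, Continuous fun x : G => g * x)
    (hr : ∀ g : G, Continuous fun x : G => x * g)
    (hG : IsAlmostParatopological G) :
    Continuous (fun p : G × G => p.1 * p.2) ∧ Continuous fun x : G => x⁻¹ := by
  have : SeparatelyContinuousMul G := ⟨hl _, hr _⟩
  have := hG.isTopologicalGroup
  exact ⟨continuous_mul, continuous_inv⟩
end

section
/- Every compact paratopological group is a topological group; that is, if G is a group with a compact topology in which multiplication G × G → G is jointly continuous, then inversion x ↦ x⁻¹ is also continuous. -/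
open Filter Set Topology

section Aux

variable {G : Type*} [Group G] [TopologicalSpace G] [ContinuousMul G]

/-- The set of points belonging to every open neighborhood of `1`. -/
def cpgN (G : Type*) [Group G] [TopologicalSpace G] : Set G :=
  {g | ∀ U : Set G, IsOpen U → (1 : G) ∈ U → g ∈ U}

lemma cpg_one_mem : (1 : G) ∈ cpgN G := fun _ _ h1 => h1

lemma cpg_mul_mem {a b : G} (ha : a ∈ cpgN G) (hb : b ∈ cpgN G) : a * b ∈ cpgN G := by
  intro U hU h1
  obtain ⟨V, hVo, hV1, hVV⟩ := exists_open_nhds_one_mul_subset (hU.mem_nhds h1)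
  exact hVV (Set.mul_mem_mul (ha V hVo hV1) (hb V hVo hV1))

lemma cpg_pow_mem {a : G} (ha : a ∈ cpgN G) : ∀ n : ℕ, a ^ n ∈ cpgN G
  | 0 => by simpa using cpg_one_mem
  | n + 1 => by
      rw [pow_succ]
      exact cpg_mul_mem (cpg_pow_mem ha n) ha

/-- In a compact paratopological group, every open neighborhood of `1` contains a positive
power of every element. Proved via a Zorn argument on closed subsemigroups; the key point is
that right translations are homeomorphisms, so a minimal closed subsemigroup `M` satisfies
`M * s = M` exactly, forcing `1 ∈ M`. -/
lemma cpg_exists_pow_mem [CompactSpace G] (x : G) {U : Set G} (hU : IsOpen U)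
    (h1 : (1 : G) ∈ U) : ∃ n : ℕ, x ^ (n + 1) ∈ U := by
  set P : Set G := Set.range (fun n : ℕ => x ^ (n + 1)) with hP
  have hPmul : ∀ a ∈ P, ∀ b ∈ P, a * b ∈ P := by
    rintro _ ⟨m, rfl⟩ _ ⟨n, rfl⟩
    exact ⟨m + n + 1, by rw [← pow_add]; ring_nf⟩
  set S : Set (Set G) :=
    {N | N ⊆ closure P ∧ IsClosed N ∧ N.Nonempty ∧ ∀ a ∈ N, ∀ b ∈ N, a * b ∈ N} with hS
  have hTS : closure P ∈ S := by
    refine ⟨subset_rfl, isClosed_closure, ⟨x, subset_closure ⟨0, by simp⟩⟩, ?_⟩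
    exact fun a ha b hb => map_mem_closure₂ continuous_mul ha hb hPmul
  have hchain : ∀ c ⊆ S, IsChain (· ⊆ ·) c → c.Nonempty →
      ∃ lb ∈ S, ∀ s ∈ c, lb ⊆ s := by
    intro c hcS hc hcne
    refine ⟨⋂₀ c, ⟨?_, ?_, ?_, ?_⟩, fun s hs => Set.sInter_subset_of_mem hs⟩
    · obtain ⟨t, ht⟩ := hcne
      exact (Set.sInter_subset_of_mem ht).trans (hcS ht).1
    · exact isClosed_sInter fun t ht => (hcS ht).2.1
    · have := @IsCompact.nonempty_sInter_of_directed_nonempty_isCompact_isClosed G _ c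
        hcne.coe_sort (IsChain.directedOn hc.symm)
        (fun t ht => (hcS ht).2.2.1)
        (fun t ht => (hcS ht).2.1.isCompact)
        (fun t ht => (hcS ht).2.1)
      exact this
    · intro a ha b hb
      rw [Set.mem_sInter] at ha hb ⊢
      exact fun t ht => (hcS ht).2.2.2 a (ha t ht) b (hb t ht)
  obtain ⟨M, -, hM⟩ := zorn_superset_nonempty S hchain _ hTS
  obtain ⟨hMsub, hMcl, ⟨s, hs⟩, hMmul⟩ := hM.prop
  -- M * s is a closed subsemigroup contained in M; by minimality it equals M.
  have himg : ((· * s) '' M) ∈ S := by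
    refine ⟨fun y hy => ?_, ?_, ⟨s * s, ⟨s, hs, rfl⟩⟩, ?_⟩
    · obtain ⟨a, haM, rfl⟩ := hy
      exact hMsub (hMmul a haM s hs)
    · have := (Homeomorph.mulRight s).isClosedMap M hMcl
      simpa [Homeomorph.coe_mulRight] using this
    · rintro _ ⟨a, haM, rfl⟩ _ ⟨b, hbM, rfl⟩
      exact ⟨a * s * b, hMmul _ (hMmul a haM s hs) b hbM, mul_assoc _ _ _⟩
  have himgsub : ((· * s) '' M) ⊆ M := by
    rintro _ ⟨a, haM, rfl⟩
    exact hMmul a haM s hs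
  have heq : ((· * s) '' M) = M := hM.eq_of_subset himg himgsub
  have hsM : s ∈ (· * s) '' M := heq.symm ▸ hs
  obtain ⟨t, htM, hts⟩ := hsM
  have hts' : t * s = s := hts
  have ht1 : t = 1 := mul_right_cancel (b := s) (by rw [hts', one_mul])
  have h1M : (1 : G) ∈ closure P := hMsub (ht1 ▸ htM)
  obtain ⟨y, hyU, n, rfl⟩ := mem_closure_iff.mp h1M U hU h1
  exact ⟨n, hyU⟩

lemma cpg_inv_mem [CompactSpace G] {g : G} (hg : g ∈ cpgN G) : g⁻¹ ∈ cpgN G := by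
  intro U hU h1
  obtain ⟨V, hVo, hV1, hVV⟩ := exists_open_nhds_one_mul_subset (hU.mem_nhds h1)
  obtain ⟨n, hn⟩ := cpg_exists_pow_mem g⁻¹ hVo hV1
  have h2 : g ^ n ∈ V := cpg_pow_mem hg n V hVo hV1
  have hkey : g⁻¹ ^ (n + 1) * g ^ n = g⁻¹ := by
    rw [inv_pow, pow_succ, mul_inv_rev, mul_assoc, inv_mul_cancel, mul_one]
  exact hkey ▸ hVV (Set.mul_mem_mul hn h2)

lemma cpg_closure_one_subset [CompactSpace G] {c : G} (hc : c ∈ closure ({1} : Set G)) :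
    c ∈ cpgN G := by
  have hinv : c⁻¹ ∈ cpgN G := by
    intro V hVo hV1
    have hopen : IsOpen ((· * c) '' V) := by
      have := (Homeomorph.mulRight c).isOpenMap V hVo
      simpa [Homeomorph.coe_mulRight] using this
    have hcmem : c ∈ (· * c) '' V := ⟨1, hV1, one_mul c⟩
    obtain ⟨y, hy, hy1⟩ := mem_closure_iff.mp hc _ hopen hcmem
    obtain ⟨v, hvV, hvc⟩ := hy
    rw [hy1] at hvc
    have : v = c⁻¹ := eq_inv_of_mul_eq_one_left hvc
    exact this ▸ hvV
  simpa using cpg_inv_mem hinv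

lemma cpg_tendsto_inv_one [CompactSpace G] :
    Tendsto (fun x : G => x⁻¹) (𝓝 1) (𝓝 (1 : G)) := by
  rw [tendsto_nhds]
  intro U hU h1
  by_contra h
  set s : Set G := (fun x : G => x⁻¹) ⁻¹' U with hs
  have hLne : (𝓝 (1 : G) ⊓ 𝓟 sᶜ).NeBot := by
    rw [inf_principal_neBot_iff]
    intro t ht
    by_contra hemp
    rw [Set.not_nonempty_iff_eq_empty] at hemp
    have hsub : t ⊆ s := fun y hy => by
      by_contra hyU
      exact Set.eq_empty_iff_forall_notMem.mp hemp y ⟨hy, hyU⟩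
    exact h (mem_of_superset ht hsub)
  set L : Filter G := 𝓝 (1 : G) ⊓ 𝓟 sᶜ with hL
  haveI : L.NeBot := hLne
  obtain ⟨c, hc⟩ := exists_clusterPt_of_compactSpace (map (fun x : G => x⁻¹) L)
  -- c is in the closed set Uᶜ
  have hcU : c ∈ Uᶜ := by
    have hmaple : map (fun x : G => x⁻¹) L ≤ 𝓟 Uᶜ := by
      refine le_trans (map_mono inf_le_right) ?_
      rw [map_principal, le_principal_iff, mem_principal]
      rintro _ ⟨y, hy, rfl⟩
      exact hy
    have := (hc.mono hmaple)
    rw [← mem_closure_iff_clusterPt] at this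
    rwa [hU.isClosed_compl.closure_eq] at this
  -- c is in the closure of {1}
  have hcmem : c ∈ closure ({1} : Set G) := by
    set H : Filter (G × G) := map (fun y : G => (y, y⁻¹)) L with hH
    have hfst : map Prod.fst H = L := by rw [hH, map_map]; rfl
    have hsnd : map Prod.snd H = map (fun x : G => x⁻¹) L := by rw [hH, map_map]; rfl
    have hHfst : H ≤ comap Prod.fst (𝓝 (1 : G)) := by
      rw [← map_le_iff_le_comap, hfst]; exact inf_le_left
    have key : ClusterPt ((1 : G), c) H := by
      rw [ClusterPt, nhds_prod_eq, Filter.prod_eq_inf]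
      have habs : comap Prod.fst (𝓝 (1 : G)) ⊓ H = H := inf_eq_right.mpr hHfst
      rw [inf_assoc, inf_comm (comap Prod.snd (𝓝 c)) H, ← inf_assoc, habs]
      rw [← map_neBot_iff Prod.snd, Filter.push_pull, hsnd]
      rw [ClusterPt] at hc
      rwa [inf_comm]
    have hcl : ClusterPt ((1 : G) * c)
        (map (fun p : G × G => p.1 * p.2) H) :=
      key.map continuous_mul.continuousAt tendsto_map
    have hmapid : map (fun p : G × G => p.1 * p.2) H = pure (1 : G) := by
      rw [hH, map_map]
      have : ((fun p : G × G => p.1 * p.2) ∘ fun y : G => (y, y⁻¹)) = fun _ : G => (1 : G) := by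
        funext y; simp
      rw [this, Filter.map_const]
    rw [hmapid, one_mul, ← principal_singleton, ← mem_closure_iff_clusterPt] at hcl
    exact hcl
  exact hcU (cpg_closure_one_subset hcmem U hU h1)

end Aux

theorem compact_paratopological_topologicalGroup {G : Type*} [Group G]
    [TopologicalSpace G] [CompactSpace G] [ContinuousMul G] :
    Continuous fun x : G => x⁻¹ := by
  rw [continuous_iff_continuousAt]
  intro x
  have h1 : Tendsto (fun y : G => x⁻¹ * y) (𝓝 x) (𝓝 1) := by
    have := (continuous_mul_left x⁻¹).tendsto x
    simpa using this
  have h2 : Tendsto (fun y : G => (x⁻¹ * y)⁻¹) (𝓝 x) (𝓝 1) :=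
    cpg_tendsto_inv_one.comp h1
  have h3 : Tendsto (fun y : G => (x⁻¹ * y)⁻¹ * x⁻¹) (𝓝 x) (𝓝 (1 * x⁻¹)) :=
    ((continuous_mul_right x⁻¹).tendsto (1 : G)).comp h2
  have heq : (fun y : G => (x⁻¹ * y)⁻¹ * x⁻¹) = fun y : G => y⁻¹ := by
    funext y
    group
  rw [heq, one_mul] at h3
  exact h3
end
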